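/- arXiv:1410.5734 — 4 statements merged into one kernel-verified Lean document; each statement's English description precedes it below -/
import Mathlib

section
/- Let $X$ be a square-integrable random variable on a product probability space $\Omega = \prod_{j \in J} E_j$ (with $J$ finite), so that the coordinates $a(j)$ are independent. Then $\mathrm{Var}(X) \geq \sum_{j \in J} \mathrm{Var}\big(\mathbb{E}[X \mid a(j)]\big)$. -/
/-!
Write `Yⱼ = 𝔼[X | a(j)]`. Each `Yⱼ` is the orthogonal projection of `X` onto the `a(j)`-measurable
functions, so `cov(Yⱼ, X) = Var Yⱼ`, and the `Yⱼ` are pairwise independent because the coordinates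
are. Expanding `0 ≤ Var(X - ∑ⱼ Yⱼ)` then gives `0 ≤ Var X - 2 ∑ⱼ Var Yⱼ + ∑ⱼ Var Yⱼ`: this is
Bessel's inequality for the orthogonal family `Yⱼ - 𝔼 X`.
-/

open MeasureTheory ProbabilityTheory

namespace ProbabilityTheory

section

variable {Ω : Type*} {m m₀ : MeasurableSpace Ω} {μ : Measure Ω} [IsProbabilityMeasure μ]

lemma covariance_condExp_left (hm : m ≤ m₀) {X : Ω → ℝ} (hX : MemLp X 2 μ) :
    cov[μ[X | m], X; μ] = Var[μ[X | m]; μ] := by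
  have hY : MemLp (μ[X | m]) 2 μ := hX.condExp one_le_two
  have hYX : Integrable (μ[X | m] * X) μ := hY.integrable_mul hX
  have h_pull : μ[μ[X | m] * X | m] =ᵐ[μ] μ[X | m] * μ[X | m] :=
    condExp_mul_of_stronglyMeasurable_left stronglyMeasurable_condExp hYX
      (hX.integrable one_le_two)
  have h_mean : μ[μ[X | m]] = μ[X] := integral_condExp hm
  rw [covariance_eq_sub hY hX, variance_eq_sub hY, ← integral_condExp hm,
    integral_congr_ae h_pull, h_mean, sq, sq]

theorem sum_variance_condExp_le_variance {ι : Type*} [Fintype ι] {m : ι → MeasurableSpace Ω}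
    (hm : ∀ i, m i ≤ m₀) (h_indep : Pairwise fun i j ↦ Indep (m i) (m j) μ) {X : Ω → ℝ}
    (hX : MemLp X 2 μ) :
    ∑ i, Var[μ[X | m i]; μ] ≤ Var[X; μ] := by
  set Y : ι → Ω → ℝ := fun i ↦ μ[X | m i]
  have hY : ∀ i, MemLp (Y i) 2 μ := fun i ↦ hX.condExp one_le_two
  have hY_indep : Pairwise fun i j ↦ Y i ⟂ᵢ[μ] Y j := fun i j hij ↦
    indep_of_indep_of_le_right
      (indep_of_indep_of_le_left (h_indep hij) stronglyMeasurable_condExp.measurable.comap_le)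
      stronglyMeasurable_condExp.measurable.comap_le
  have h_var_sum : Var[∑ i, Y i; μ] = ∑ i, Var[Y i; μ] :=
    IndepFun.variance_sum (fun i _ ↦ hY i) fun i _ j _ hij ↦ hY_indep hij
  have h_cov_sum : cov[X, ∑ i, Y i; μ] = ∑ i, Var[Y i; μ] := by
    rw [covariance_sum_right hY hX]
    exact Finset.sum_congr rfl fun i _ ↦ by rw [covariance_comm, covariance_condExp_left (hm i) hX]
  have h_nonneg := variance_nonneg (X - ∑ i, Y i) μ
  rw [variance_sub hX (memLp_finsetSum' _ fun i _ ↦ hY i), h_cov_sum, h_var_sum] at h_nonneg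
  linarith

end

lemma indep_comap_eval_pi {J : Type*} [Fintype J] {E : J → Type*}
    [∀ j, MeasurableSpace (E j)] (μ : ∀ j, Measure (E j)) [∀ j, IsProbabilityMeasure (μ j)]
    {i j : J} (hij : i ≠ j) :
    Indep (MeasurableSpace.comap (fun a : ∀ k, E k ↦ a i) inferInstance)
      (MeasurableSpace.comap (fun a : ∀ k, E k ↦ a j) inferInstance) (Measure.pi μ) :=
  (iIndepFun_pi (X := fun _ ↦ id) fun _ ↦ aemeasurable_id).indepFun hij

end ProbabilityTheory

theorem stmt0 {J : Type*} [Fintype J] {E : J → Type*}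
    [∀ j, MeasurableSpace (E j)] (μ : ∀ j, Measure (E j))
    [∀ j, IsProbabilityMeasure (μ j)]
    (X : (∀ j, E j) → ℝ) (hX : MemLp X 2 (Measure.pi μ)) :
    ∑ j : J,
        variance ((Measure.pi μ)[X | MeasurableSpace.comap (fun a => a j) inferInstance])
          (Measure.pi μ)
      ≤ variance X (Measure.pi μ) :=
  sum_variance_condExp_le_variance (fun j ↦ (measurable_pi_apply j).comap_le)
    (fun _ _ hij ↦ indep_comap_eval_pi μ hij) hX
end

section
/- Define recursively functions $\psi_{k,\mu} : [0,\infty) \to [0,\infty)$ for $\mu > 0$ by $\psi_{1,\mu}(\nu) = 1/(\mu + \nu)$ and $\psi_{k+1,\mu}(\nu) = \frac{1}{2^k - 1}\big( 2^k \psi_{k, \mu/2}(\nu) - \psi_{k,\mu}(\nu) \big)$. Then for every $k \geq 1$ there exists a homogeneous polynomial $p_k(\mu,\nu) = \sum_{j=0}^{k-1} a_j \mu^j \nu^{k-1-j}$ of total degree $k-1$ such that for all $\mu > 0$, $\nu \geq 0$: $\partial_\mu \psi_{k,\mu}(\nu) = \mu^{k-1} \, p_k(\mu, \nu) \, / \,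 \prod_{i=0}^{k-1}(2^{-i}\mu + \nu)^2$. -/
/-!
Write `p_k` as the degree `k - 1` homogenization of a univariate polynomial and let
`Q_k μ ν = ∏_{i<k} (μ / 2 ^ i + ν) ^ 2`. Differentiating the recursion, the weight `2 ^ k` cancels
the factor `2 ^ (1 - k)` coming from `(μ / 2) ^ (k - 1) / 2`, and since
`Q_{k+1} μ = Q_k (μ / 2) (μ + ν) ^ 2 = Q_k μ (μ / 2 ^ k + ν) ^ 2`, the derivative of `ψ_{k+1}` is
`μ ^ (k - 1) (p_k (μ / 2, ν) (μ + ν) ^ 2 - p_k (μ, ν) (μ / 2 ^ k + ν) ^ 2) / Q_{k+1} μ` up to the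
factor `1 / (2 ^ k - 1)`. The homogeneous polynomial in parentheses vanishes at `μ = 0`, so it is
`μ` times a homogeneous polynomial of degree `k`.
-/

open Finset Polynomial

namespace Polynomial

variable {R : Type*}

lemma eval_homogenize_eq_sum [CommSemiring R] (p : R[X]) (n : ℕ) (x y : R) :
    MvPolynomial.eval ![x, y] (p.homogenize n) =
      ∑ j ∈ range (n + 1), p.coeff j * x ^ j * y ^ (n - j) := by
  rw [homogenize, map_sum, Finset.Nat.sum_antidiagonal_eq_sum_range_succ_mk]
  refine sum_congr rfl fun j _ => ?_
  rw [MvPolynomial.eval_monomial, Finsupp.update_eq_add_single (by simp),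
    Finsupp.prod_add_index' (by simp) (by simp [pow_add])]
  simp [mul_assoc]

lemma eval_homogenize_comp_C_mul_X [CommSemiring R] (p : R[X]) (n : ℕ) (c x y : R) :
    MvPolynomial.eval ![x, y] ((p.comp (C c * X)).homogenize n) =
      MvPolynomial.eval ![c * x, y] (p.homogenize n) := by
  simp only [eval_homogenize_eq_sum, comp_C_mul_X_coeff, mul_pow, mul_assoc]

lemma eval_homogenize_succ_of_coeff_zero [CommSemiring R] {p : R[X]} {n : ℕ}
    (hp : p.natDegree ≤ n + 1) (h0 : p.coeff 0 = 0) (x y : R) :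
    MvPolynomial.eval ![x, y] (p.homogenize (n + 1)) =
      x * MvPolynomial.eval ![x, y] (p.divX.homogenize n) := by
  have hdivX : p.divX.natDegree ≤ n := by
    rw [natDegree_divX_eq_natDegree_tsub_one]; omega
  conv_lhs => rw [← X_mul_divX_add p, h0, C_0, add_zero, add_comm n,
    homogenize_mul _ _ natDegree_X_le hdivX]
  simp

lemma exists_eval_homogenize_sub_eq_mul [CommRing R] (p : R[X]) {n : ℕ} (hp : p.natDegree ≤ n)
    (a b : R) :
    ∃ q : R[X], q.natDegree ≤ n + 1 ∧ ∀ x y : R,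
      MvPolynomial.eval ![a * x, y] (p.homogenize n) * (x + y) ^ 2 -
          MvPolynomial.eval ![x, y] (p.homogenize n) * (b * x + y) ^ 2 =
        x * MvPolynomial.eval ![x, y] (q.homogenize (n + 1)) := by
  set P := p.comp (C a * X) * (X + 1) ^ 2 - p * (C b * X + 1) ^ 2
  have hcomp : (p.comp (C a * X)).natDegree ≤ n :=
    natDegree_comp_le.trans <| by
      simpa using Nat.mul_le_mul hp ((natDegree_C_mul_le a X).trans natDegree_X_le)
  have hP : P.natDegree ≤ n + 2 :=
    (natDegree_sub_le_of_le (natDegree_mul_le_of_le (n := 2) hcomp (by compute_degree))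
      (natDegree_mul_le_of_le (n := 2) hp (by compute_degree))).trans (max_self _).le
  have hP0 : P.coeff 0 = 0 := by simp [P, coeff_zero_eq_eval_zero]
  refine ⟨P.divX, ?_, fun x y => ?_⟩
  · rw [natDegree_divX_eq_natDegree_tsub_one]; omega
  have hlin : ∀ c : R, (C c * X + 1).natDegree ≤ 1 := fun c => by compute_degree
  have hsq : ∀ c : R, MvPolynomial.eval ![x, y] (((C c * X + 1) ^ 2).homogenize 2) =
      (c * x + y) ^ 2 := fun c => by
    rw [sq, homogenize_mul _ _ (hlin c) (hlin c)]
    simp [sq]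
  rw [← eval_homogenize_succ_of_coeff_zero hP hP0, homogenize_sub,
    show n + 1 + 1 = n + 2 from rfl, homogenize_mul (n := 2) _ _ hcomp (by compute_degree),
    homogenize_mul (n := 2) _ _ hp (by compute_degree)]
  have hsq1 : MvPolynomial.eval ![x, y] (((X + 1 : R[X]) ^ 2).homogenize 2) = (x + y) ^ 2 := by
    simpa using hsq 1
  rw [map_sub, map_mul, map_mul, hsq1, hsq b, eval_homogenize_comp_C_mul_X]

end Polynomial

noncomputable def richardsonDenom (k : ℕ) (μ ν : ℝ) : ℝ := ∏ i ∈ range k, (μ / 2 ^ i + ν) ^ 2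

lemma richardsonDenom_succ (k : ℕ) (μ ν : ℝ) :
    richardsonDenom (k + 1) μ ν = richardsonDenom k μ ν * (μ / 2 ^ k + ν) ^ 2 :=
  prod_range_succ _ _

lemma richardsonDenom_succ_half (k : ℕ) (μ ν : ℝ) :
    richardsonDenom (k + 1) μ ν = richardsonDenom k (μ / 2) ν * (μ + ν) ^ 2 := by
  simp [richardsonDenom, prod_range_succ', pow_succ', div_div]

lemma richardsonDenom_pos (k : ℕ) {μ ν : ℝ} (hμ : 0 < μ) (hν : 0 ≤ ν) :
    0 < richardsonDenom k μ ν :=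
  prod_pos fun _ _ => by positivity

lemma hasDerivAt_richardson_succ {n : ℕ} {ν : ℝ} (hν : 0 ≤ ν) (c : ℝ) {f P P' : ℝ → ℝ}
    (hf : ∀ μ, 0 < μ → HasDerivAt f (μ ^ n * P μ / richardsonDenom (n + 1) μ ν) μ)
    (hP : ∀ μ, P (μ / 2) * (μ + ν) ^ 2 - P μ * (μ / 2 ^ (n + 1) + ν) ^ 2 = μ * P' μ)
    {μ : ℝ} (hμ : 0 < μ) :
    HasDerivAt (fun m => c * (2 ^ (n + 1) * f (m / 2) - f m))
      (μ ^ (n + 1) * (c * P' μ) / richardsonDenom (n + 2) μ ν) μ := by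
  have hhalf := (hf (μ / 2) (by positivity)).comp μ ((hasDerivAt_id μ).div_const 2)
  refine (((hhalf.const_mul (2 ^ (n + 1))).sub (hf μ hμ)).const_mul c).congr_deriv ?_
  have hhalf_eq : P (μ / 2) / richardsonDenom (n + 1) (μ / 2) ν =
      P (μ / 2) * (μ + ν) ^ 2 / richardsonDenom (n + 2) μ ν := by
    rw [richardsonDenom_succ_half (n + 1), mul_div_mul_right _ _ (by positivity)]
  have heq : P μ / richardsonDenom (n + 1) μ ν =
      P μ * (μ / 2 ^ (n + 1) + ν) ^ 2 / richardsonDenom (n + 2) μ ν := by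
    rw [richardsonDenom_succ (n + 1), mul_div_mul_right _ _ (by positivity)]
  have hscale : (2 : ℝ) ^ (n + 1) * (μ / 2) ^ n * (1 / 2) = μ ^ n := by
    rw [div_pow, pow_succ]; field_simp
  calc c * (2 ^ (n + 1) * ((μ / 2) ^ n * P (μ / 2) / richardsonDenom (n + 1) (μ / 2) ν * (1 / 2))
        - μ ^ n * P μ / richardsonDenom (n + 1) μ ν)
      = c * μ ^ n * (P (μ / 2) / richardsonDenom (n + 1) (μ / 2) ν
          - P μ / richardsonDenom (n + 1) μ ν) := by
        rw [← hscale]; ring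
    _ = μ ^ (n + 1) * (c * P' μ) / richardsonDenom (n + 2) μ ν := by
        rw [hhalf_eq, heq, ← sub_div, hP]; ring

theorem exists_hasDerivAt_richardson (ψ : ℕ → ℝ → ℝ → ℝ)
    (h1 : ∀ μ ν : ℝ, ψ 1 μ ν = 1 / (μ + ν))
    (hrec : ∀ k : ℕ, 1 ≤ k → ∀ μ ν : ℝ,
      ψ (k + 1) μ ν = (1 / ((2 : ℝ) ^ k - 1)) * ((2 : ℝ) ^ k * ψ k (μ / 2) ν - ψ k μ ν))
    (n : ℕ) :
    ∃ q : ℝ[X], q.natDegree ≤ n ∧ ∀ μ ν : ℝ, 0 < μ → 0 ≤ ν →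
      HasDerivAt (fun m => ψ (n + 1) m ν)
        (μ ^ n * MvPolynomial.eval ![μ, ν] (q.homogenize n) / richardsonDenom (n + 1) μ ν) μ := by
  induction n with
  | zero =>
    refine ⟨C (-1), by simp, fun μ ν hμ hν => ?_⟩
    simp only [zero_add, h1, one_div]
    refine (((hasDerivAt_id' μ).add_const ν).inv (by positivity)).congr_deriv ?_
    simp [richardsonDenom]
  | succ n ih =>
    obtain ⟨q, hq, hderiv⟩ := ih
    obtain ⟨q', hq', hq'_eq⟩ := exists_eval_homogenize_sub_eq_mul q hq 2⁻¹ (2 ^ (n + 1))⁻¹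
    refine ⟨C (1 / (2 ^ (n + 1) - 1)) * q', (natDegree_C_mul_le _ _).trans hq',
      fun μ ν hμ hν => ?_⟩
    simp only [hrec (n + 1) n.succ_pos]
    convert hasDerivAt_richardson_succ hν (1 / (2 ^ (n + 1) - 1))
      (P := fun μ => MvPolynomial.eval ![μ, ν] (q.homogenize n))
      (fun μ hμ => hderiv μ ν hμ hν)
      (fun μ => by simpa only [div_eq_inv_mul] using hq'_eq μ ν) hμ using 1
    simp

theorem stmt5 (ψ : ℕ → ℝ → ℝ → ℝ)
    (h1 : ∀ μ ν : ℝ, ψ 1 μ ν = 1 / (μ + ν))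
    (hrec : ∀ k : ℕ, 1 ≤ k → ∀ μ ν : ℝ,
      ψ (k + 1) μ ν = (1 / ((2 : ℝ) ^ k - 1)) * ((2 : ℝ) ^ k * ψ k (μ / 2) ν - ψ k μ ν)) :
    ∀ k : ℕ, 1 ≤ k → ∃ a : ℕ → ℝ, ∀ μ ν : ℝ, 0 < μ → 0 ≤ ν →
      HasDerivAt (fun m => ψ k m ν)
        (μ ^ (k - 1) * (∑ j ∈ Finset.range k, a j * μ ^ j * ν ^ (k - 1 - j)) /
          ∏ i ∈ Finset.range k, (μ / 2 ^ i + ν) ^ 2) μ := by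
  intro k hk
  obtain ⟨n, rfl⟩ := Nat.exists_eq_add_of_le' hk
  obtain ⟨q, -, hq⟩ := exists_hasDerivAt_richardson ψ h1 hrec n
  refine ⟨q.coeff, fun μ ν hμ hν => ?_⟩
  simpa only [Nat.add_sub_cancel, eval_homogenize_eq_sum, richardsonDenom] using hq μ ν hμ hν
end

section
/- With $\psi_{k,\mu}$ as in the Richardson extrapolation recursion ($\psi_{1,\mu}(\nu) = (\mu+\nu)^{-1}$, $\psi_{k+1,\mu} = \frac{1}{2^k-1}(2^k \psi_{k,\mu/2} - \psi_{k,\mu})$), there is a constant $C_k$ depending only on $k$ such that for all $\mu > 0$ and $\nu \geq 0$: $|\partial_\mu \psi_{k,\mu}(\nu)| \leq C_k \, \mu^{k-1} / (\mu + \nu)^{k+1}$. -/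
/-!
Let `D n j` be the `j`-th `μ`-derivative of `ψ (n + 1)`; differentiating the recursion term by
term gives a recursion for `D n j`, from which `|D n j| ≤ C / (μ + ν) ^ (j + 1)` follows by
induction on `n`. Each extrapolation step kills one more Taylor coefficient at `μ = 0`: the step
from `n` to `n + 1` multiplies `D n j 0 ν` by `2 ^ (n + 1) / 2 ^ j - 1`, which vanishes for
`j = n + 1`. So `D n j 0 ν = 0` for `1 ≤ j ≤ n`, and integrating `n` times from `μ = 0` gives
`|D n 1| ≤ C μ ^ n / ν ^ (n + 2)`, the bound needed when `μ ≤ ν`; when `ν ≤ μ` the crude bound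
`C / (μ + ν) ^ 2` already suffices.
-/

open Nat

/-- `richardsonDeriv n j μ ν` is the `j`-th derivative of `μ ↦ ψ (n + 1) μ ν`. -/
noncomputable def richardsonDeriv : ℕ → ℕ → ℝ → ℝ → ℝ
  | 0, j, μ, ν => (-1) ^ j * j ! / (μ + ν) ^ (j + 1)
  | n + 1, j, μ, ν => ((2 : ℝ) ^ (n + 1) - 1)⁻¹ *
      (2 ^ (n + 1) / 2 ^ j * richardsonDeriv n j (μ / 2) ν - richardsonDeriv n j μ ν)

theorem hasDerivAt_richardsonDeriv (n j : ℕ) {μ ν : ℝ} (hν : 0 ≤ ν) (hμν : 0 < μ + ν) :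
    HasDerivAt (fun m => richardsonDeriv n j m ν) (richardsonDeriv n (j + 1) μ ν) μ := by
  induction n generalizing μ with
  | zero =>
    refine ((hasDerivAt_const μ ((-1 : ℝ) ^ j * j !)).fun_div
      (((hasDerivAt_id' μ).add_const ν).fun_pow (j + 1)) (pow_ne_zero _ hμν.ne')).congr_deriv ?_
    rw [richardsonDeriv, factorial_succ]
    field_simp
    push_cast
    ring
  | succ n ih =>
    have hhalf : HasDerivAt (fun m => richardsonDeriv n j (m / 2) ν)
        (richardsonDeriv n (j + 1) (μ / 2) ν * (1 / 2)) μ :=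
      (ih (μ := μ / 2) (by linarith)).comp (h := fun m => m / 2) μ ((hasDerivAt_id' μ).div_const 2)
    refine (((hhalf.const_mul (2 ^ (n + 1) / 2 ^ j)).sub (ih hμν)).const_mul
      ((2 : ℝ) ^ (n + 1) - 1)⁻¹).congr_deriv ?_
    rw [richardsonDeriv, pow_succ]
    ring

theorem richardsonDeriv_at_zero {n j : ℕ} (hj : 1 ≤ j) (hjn : j ≤ n) (ν : ℝ) :
    richardsonDeriv n j 0 ν = 0 := by
  induction n with
  | zero => omega
  | succ n ih =>
    have h : richardsonDeriv (n + 1) j 0 ν =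
        ((2 : ℝ) ^ (n + 1) - 1)⁻¹ * ((2 ^ (n + 1) / 2 ^ j - 1) * richardsonDeriv n j 0 ν) := by
      rw [richardsonDeriv, zero_div]
      ring
    rcases hjn.lt_or_eq with hjn | rfl
    · rw [h, ih (by omega), mul_zero, mul_zero]
    · rw [h, div_self (by positivity), sub_self, zero_mul, mul_zero]

theorem div_half_add_pow_le {C μ ν : ℝ} (hC : 0 ≤ C) (hν : 0 ≤ ν) (hμν : 0 < μ + ν) (k : ℕ) :
    C / (μ / 2 + ν) ^ k ≤ 2 ^ k * C / (μ + ν) ^ k := by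
  have hhalf : 0 < μ / 2 + ν := by linarith
  rw [div_le_div_iff₀ (by positivity) (by positivity)]
  calc C * (μ + ν) ^ k ≤ C * (2 * (μ / 2 + ν)) ^ k := by gcongr; linarith
    _ = 2 ^ k * C * (μ / 2 + ν) ^ k := by rw [mul_pow]; ring

theorem exists_abs_richardsonDeriv_le (n j : ℕ) : ∃ C > 0, ∀ μ ν : ℝ, 0 ≤ ν → 0 < μ + ν →
    |richardsonDeriv n j μ ν| ≤ C / (μ + ν) ^ (j + 1) := by
  induction n with
  | zero =>
    refine ⟨j !, by positivity, fun μ ν _ hμν => ?_⟩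
    rw [richardsonDeriv, abs_div, abs_mul, abs_pow, abs_neg, abs_one, one_pow, one_mul,
      Nat.abs_cast, abs_of_pos (by positivity)]
  | succ n ih =>
    obtain ⟨C, hC, hbound⟩ := ih
    refine ⟨(2 ^ (n + 2) + 1) * C, by positivity, fun μ ν hν hμν => ?_⟩
    have hden : (1 : ℝ) ≤ 2 ^ (n + 1) - 1 := by
      linarith [one_le_pow₀ (n := n) (one_le_two (α := ℝ)), pow_succ (2 : ℝ) n]
    calc |richardsonDeriv (n + 1) j μ ν|
        ≤ 1 * (2 ^ (n + 1) / 2 ^ j * |richardsonDeriv n j (μ / 2) ν|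
          + |richardsonDeriv n j μ ν|) := by
          rw [richardsonDeriv, abs_mul, abs_of_pos (inv_pos.2 (by linarith))]
          gcongr
          · exact inv_le_one_of_one_le₀ hden
          · refine (abs_sub _ _).trans ?_
            rw [abs_mul, abs_of_pos (by positivity)]
      _ ≤ 2 ^ (n + 1) / 2 ^ j * (2 ^ (j + 1) * C / (μ + ν) ^ (j + 1)) + C / (μ + ν) ^ (j + 1) := by
          rw [one_mul]
          gcongr
          · exact (hbound _ _ hν (by linarith)).trans (div_half_add_pow_le hC.le hν hμν _)
          · exact hbound μ ν hν hμν
      _ = (2 ^ (n + 2) + 1) * C / (μ + ν) ^ (j + 1) := by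
          field_simp
          ring

theorem abs_le_mul_pow_of_derivs_vanish_at_zero {f : ℕ → ℝ → ℝ} {M : ℝ} (n : ℕ)
    (hderiv : ∀ i < n, ∀ t ≥ 0, HasDerivAt (f i) (f (i + 1) t) t)
    (hzero : ∀ i < n, f i 0 = 0) (hbound : ∀ t ≥ 0, |f n t| ≤ M) {x : ℝ} (hx : 0 ≤ x) :
    |f 0 x| ≤ M * x ^ n := by
  induction n generalizing f x with
  | zero => simpa using hbound x hx
  | succ n ih =>
    have hM : 0 ≤ M := (abs_nonneg _).trans (hbound 0 le_rfl)
    have hf₁ : ∀ t ≥ 0, |f 1 t| ≤ M * t ^ n := fun t ht =>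
      ih (f := fun i => f (i + 1)) (fun i hi => hderiv (i + 1) (by omega))
        (fun i hi => hzero (i + 1) (by omega)) hbound ht
    have hmvt := norm_image_sub_le_of_norm_deriv_le_segment' (f := f 0) (C := M * x ^ n)
      (fun t ht => (hderiv 0 n.succ_pos t ht.1).hasDerivWithinAt)
      (fun t ht => (hf₁ t ht.1).trans (by gcongr; exacts [ht.1, ht.2.le])) x ⟨hx, le_rfl⟩
    rw [hzero 0 n.succ_pos, sub_zero, sub_zero, Real.norm_eq_abs] at hmvt
    rwa [pow_succ, ← mul_assoc]

theorem exists_abs_richardsonDeriv_one_le (n : ℕ) : ∃ C > 0, ∀ μ ν : ℝ, 0 ≤ μ → 0 < ν →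
    |richardsonDeriv n 1 μ ν| ≤ C * μ ^ n / ν ^ (n + 2) := by
  obtain ⟨C, hC, hbound⟩ := exists_abs_richardsonDeriv_le n (n + 1)
  refine ⟨C, hC, fun μ ν hμ hν => ?_⟩
  have h := abs_le_mul_pow_of_derivs_vanish_at_zero (f := fun i m => richardsonDeriv n (i + 1) m ν)
    (M := C / ν ^ (n + 2)) n
    (fun i _ t ht => hasDerivAt_richardsonDeriv n (i + 1) hν.le (by linarith))
    (fun i hi => richardsonDeriv_at_zero (by omega) (by omega) ν)
    (fun t ht => (hbound t ν hν.le (by linarith)).trans (by gcongr; linarith)) hμ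
  calc _ ≤ C / ν ^ (n + 2) * μ ^ n := h
    _ = C * μ ^ n / ν ^ (n + 2) := by ring

theorem le_mul_pow_div_of_le_far_of_le_near {a C₁ C₂ μ ν : ℝ} (n : ℕ) (hC₁ : 0 ≤ C₁)
    (hC₂ : 0 ≤ C₂) (hμ : 0 < μ) (hν : 0 ≤ ν) (hfar : a ≤ C₁ / (μ + ν) ^ 2)
    (hnear : 0 < ν → a ≤ C₂ * μ ^ n / ν ^ (n + 2)) :
    a ≤ 2 ^ (n + 2) * (C₁ + C₂) * μ ^ n / (μ + ν) ^ (n + 2) := by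
  rcases le_total ν μ with hνμ | hμν
  · refine hfar.trans ?_
    rw [div_le_div_iff₀ (by positivity) (by positivity)]
    calc C₁ * (μ + ν) ^ (n + 2) = C₁ * (μ + ν) ^ n * (μ + ν) ^ 2 := by ring
      _ ≤ C₁ * (2 * μ) ^ n * (μ + ν) ^ 2 := by gcongr; linarith
      _ = 2 ^ n * C₁ * μ ^ n * (μ + ν) ^ 2 := by ring
      _ ≤ 2 ^ (n + 2) * (C₁ + C₂) * μ ^ n * (μ + ν) ^ 2 := by
          gcongr
          · exact one_le_two
          · omega
          · linarith
  · have hν' : 0 < ν := hμ.trans_le hμν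
    refine (hnear hν').trans ?_
    rw [div_le_div_iff₀ (by positivity) (by positivity)]
    calc C₂ * μ ^ n * (μ + ν) ^ (n + 2) ≤ C₂ * μ ^ n * (2 * ν) ^ (n + 2) := by gcongr; linarith
      _ = 2 ^ (n + 2) * C₂ * μ ^ n * ν ^ (n + 2) := by ring
      _ ≤ 2 ^ (n + 2) * (C₁ + C₂) * μ ^ n * ν ^ (n + 2) := by gcongr; linarith

theorem psi_eq_richardsonDeriv (ψ : ℕ → ℝ → ℝ → ℝ) (h1 : ∀ μ ν : ℝ, ψ 1 μ ν = 1 / (μ + ν))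
    (hrec : ∀ k : ℕ, 1 ≤ k → ∀ μ ν : ℝ,
      ψ (k + 1) μ ν = (1 / ((2 : ℝ) ^ k - 1)) * ((2 : ℝ) ^ k * ψ k (μ / 2) ν - ψ k μ ν))
    (n : ℕ) (μ ν : ℝ) : ψ (n + 1) μ ν = richardsonDeriv n 0 μ ν := by
  induction n generalizing μ with
  | zero => simp [h1, richardsonDeriv]
  | succ n ih => simp [hrec (n + 1) (by omega), ih, richardsonDeriv]

theorem stmt6 (ψ : ℕ → ℝ → ℝ → ℝ)
    (h1 : ∀ μ ν : ℝ, ψ 1 μ ν = 1 / (μ + ν))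
    (hrec : ∀ k : ℕ, 1 ≤ k → ∀ μ ν : ℝ,
      ψ (k + 1) μ ν = (1 / ((2 : ℝ) ^ k - 1)) * ((2 : ℝ) ^ k * ψ k (μ / 2) ν - ψ k μ ν)) :
    ∀ k : ℕ, 1 ≤ k → ∃ C > (0 : ℝ), ∀ μ ν : ℝ, 0 < μ → 0 ≤ ν →
      |deriv (fun m => ψ k m ν) μ| ≤ C * μ ^ (k - 1) / (μ + ν) ^ (k + 1) := by
  intro k hk
  obtain ⟨n, rfl⟩ : ∃ n, k = n + 1 := ⟨k - 1, by omega⟩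
  obtain ⟨C₁, hC₁, hfar⟩ := exists_abs_richardsonDeriv_le n 1
  obtain ⟨C₂, hC₂, hnear⟩ := exists_abs_richardsonDeriv_one_le n
  refine ⟨2 ^ (n + 2) * (C₁ + C₂), by positivity, fun μ ν hμ hν => ?_⟩
  have hderiv : deriv (fun m => ψ (n + 1) m ν) μ = richardsonDeriv n 1 μ ν := by
    simp_rw [psi_eq_richardsonDeriv ψ h1 hrec]
    exact (hasDerivAt_richardsonDeriv n 0 hν (by linarith)).deriv
  rw [hderiv, add_tsub_cancel_right]
  exact le_mul_pow_div_of_le_far_of_le_near n hC₁.le hC₂.le hμ hν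
    (hfar μ ν hν (by linarith)) (hnear μ ν hμ.le)
end

section
/- For $d \geq 1$ there exists $C > 0$ (depending on $d$ and $c$) such that for all $\mu \in (0, 1/2]$: $\sum_{x \in \mathbb{Z}^d} \frac{e^{-c\sqrt{\mu}|x|}}{1 + |x|^d} \leq C (1 + |\log \mu|)$. -/
/-!
Group the lattice points by their sup norm `n`. The shell of radius `n ≥ 1` has
`(2n+1)^d - (2n-1)^d ≤ d 3^d n^(d-1)` points, so with `t = exp (-c √μ)` the sum is at most
`1 + d 3^d ∑_{n ≥ 1} t^n / n = 1 - d 3^d log (1 - t)`. Since `e^a ≥ 1 + a`, we have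
`1 - e^(-a) ≥ a e^(-a)`, hence `-log (1 - t) ≤ a - log a` for `a = c √μ`, and
`-log a = -log c - (log μ) / 2`.
-/

/-- The sup norm of a lattice point, as a real number. -/
noncomputable def supNorm {d : ℕ} (x : Fin d → ℤ) : ℝ :=
  ((Finset.univ.sup fun i => (x i).natAbs : ℕ) : ℝ)

open Finset Real

lemma tsum_comp_le_tsum_of_card_mul_le {α : Type*} {N : α → ℕ} {g h : ℕ → ℝ} (S : ℕ → Finset α)
    (hS : ∀ x, x ∈ S (N x)) (hg : 0 ≤ g) (hh : Summable h) (hgh : ∀ n, #(S n) * g n ≤ h n) :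
    ∑' x, g (N x) ≤ ∑' n, h n := by
  classical
  have h_nonneg (n : ℕ) : 0 ≤ h n := (mul_nonneg (Nat.cast_nonneg _) (hg n)).trans (hgh n)
  refine Real.tsum_le_of_sum_le (fun x => hg (N x)) fun s => ?_
  calc ∑ x ∈ s, g (N x) = ∑ n ∈ s.image N, #{x ∈ s | N x = n} • g n := Finset.sum_comp g N
    _ ≤ ∑ n ∈ s.image N, h n := by
        gcongr with n
        have hfiber : {x ∈ s | N x = n} ⊆ S n := fun x hx => (mem_filter.1 hx).2 ▸ hS x
        calc #{x ∈ s | N x = n} • g n = (#{x ∈ s | N x = n} : ℝ) * g n := nsmul_eq_mul _ _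
          _ ≤ #(S n) * g n := by gcongr; exact hg n
          _ ≤ h n := hgh n
    _ ≤ ∑' n, h n := hh.sum_le_tsum _ fun n _ => h_nonneg n

lemma neg_log_one_sub_exp_neg_le {a : ℝ} (ha : 0 < a) : -log (1 - exp (-a)) ≤ a - log a := by
  have hmul : a * exp (-a) ≤ 1 - exp (-a) := by
    have := mul_le_mul_of_nonneg_right (add_one_le_exp a) (exp_pos (-a)).le
    rw [add_mul, ← exp_add, add_neg_cancel, exp_zero] at this
    linarith
  have := log_le_log (by positivity) hmul
  rw [log_mul ha.ne' (exp_pos _).ne', log_exp] at this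
  linarith

section LatticeShells

variable {ι : Type*} [Fintype ι]

def natSupNorm (x : ι → ℤ) : ℕ := univ.sup fun i => (x i).natAbs

variable [DecidableEq ι]

lemma natSupNorm_le_iff {x : ι → ℤ} {n : ℕ} : natSupNorm x ≤ n ↔ x ∈ Icc (-n : ι → ℤ) n := by
  simp only [natSupNorm, Finset.sup_le_iff, mem_univ, true_implies, mem_Icc, Pi.le_def,
    Pi.neg_apply, Pi.natCast_apply, ← forall_and]
  exact forall_congr' fun i => by omega

lemma card_Icc_neg_natCast (n : ℕ) : #(Icc (-n : ι → ℤ) n) = (2 * n + 1) ^ Fintype.card ι := by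
  simp only [Pi.card_Icc, Pi.neg_apply, Pi.natCast_apply, Int.card_Icc, prod_const, card_univ]
  congr 1
  omega

lemma mem_box_natSupNorm (x : ι → ℤ) : x ∈ box (natSupNorm x) := by
  cases h : natSupNorm x with
  | zero => simpa [funext_iff] using natSupNorm_le_iff.1 h.le
  | succ m =>
    rw [box_succ_eq_sdiff, mem_sdiff, Nat.succ_eq_add_one, ← natSupNorm_le_iff,
      ← natSupNorm_le_iff]
    omega

lemma card_box_succ_eq_pow_sub_pow (m : ℕ) : #(box (m + 1) : Finset (ι → ℤ)) =
    (2 * m + 3) ^ Fintype.card ι - (2 * m + 1) ^ Fintype.card ι := by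
  rw [box_succ_eq_sdiff, card_sdiff_of_subset, card_Icc_neg_natCast, card_Icc_neg_natCast]
  · rfl
  · exact Icc_subset_Icc (by simp) (by simp)

lemma card_box_mul_le (n : ℕ) :
    #(box n : Finset (ι → ℤ)) * n ≤ Fintype.card ι * 3 ^ Fintype.card ι * n ^ Fintype.card ι := by
  rcases n with _ | m
  · simp
  rw [card_box_succ_eq_pow_sub_pow]
  rcases Fintype.card ι with _ | k
  · simp
  have hdiff :
      (2 * m + 3 : ℤ) ^ (k + 1) - (2 * m + 1) ^ (k + 1) ≤ 2 * (k + 1 : ℕ) * (2 * m + 3) ^ k := by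
    have hmax : max |(2 * m + 3 : ℤ)| |2 * m + 1| = 2 * m + 3 := by
      rw [abs_of_nonneg (by positivity), abs_of_nonneg (by positivity)]; omega
    have := abs_pow_sub_pow_le (2 * m + 3 : ℤ) (2 * m + 1) (k + 1)
    rw [hmax, add_tsub_cancel_right, show (2 * m + 3 : ℤ) - (2 * m + 1) = 2 by ring] at this
    exact (le_abs_self _).trans this
  have hle : (2 * m + 1) ^ (k + 1) ≤ (2 * m + 3) ^ (k + 1) := Nat.pow_le_pow_left (by omega) _
  zify [hle]
  calc ((2 * m + 3 : ℤ) ^ (k + 1) - (2 * m + 1) ^ (k + 1)) * (m + 1 : ℕ)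
      ≤ 2 * (k + 1 : ℕ) * (2 * m + 3) ^ k * (m + 1 : ℕ) := by gcongr
    _ = (k + 1 : ℕ) * (2 * m + 3) ^ k * (2 * m + 2) := by push_cast; ring
    _ ≤ (k + 1 : ℕ) * (2 * m + 3) ^ k * (2 * m + 3) := by gcongr; omega
    _ ≤ (k + 1 : ℕ) * (3 * (m + 1 : ℕ)) ^ (k + 1) := by
        rw [mul_assoc, ← pow_succ]; gcongr; push_cast; omega
    _ = _ := by push_cast; rw [mul_pow]; ring

lemma tsum_pow_natSupNorm_div_le {t : ℝ} (ht0 : 0 ≤ t) (ht1 : t < 1) :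
    ∑' x : ι → ℤ, t ^ natSupNorm x / (1 + (natSupNorm x : ℝ) ^ Fintype.card ι)
      ≤ 1 + Fintype.card ι * 3 ^ Fintype.card ι * -log (1 - t) := by
  set d := Fintype.card ι
  set K : ℝ := d * 3 ^ d
  -- the `n = 0` term is `t ^ 0 / 0 = 0`
  have hlog : HasSum (fun n : ℕ => t ^ n / n) (-log (1 - t)) := by
    have := Real.hasSum_pow_div_log_of_abs_lt_one (x := t) (by rwa [abs_of_nonneg ht0])
    rw [← hasSum_nat_add_iff' 1]
    simpa using this
  have hsum : HasSum (fun n : ℕ => (if n = 0 then 1 else 0) + K * (t ^ n / n))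
      (1 + K * -log (1 - t)) :=
    (hasSum_ite_eq 0 1).add (hlog.mul_left K)
  rw [← hsum.tsum_eq]
  refine tsum_comp_le_tsum_of_card_mul_le (g := fun n => t ^ n / (1 + (n : ℝ) ^ d)) box
    mem_box_natSupNorm (fun n => by positivity) hsum.summable fun n => ?_
  rcases n with _ | n
  · simpa using inv_le_one_of_one_le₀ (le_add_of_nonneg_right (pow_nonneg le_rfl d))
  have hcard : (#(box (n + 1) : Finset (ι → ℤ)) : ℝ) * (n + 1 : ℕ) ≤ K * (n + 1 : ℕ) ^ d := by
    simp only [K]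
    exact_mod_cast card_box_mul_le (ι := ι) (n + 1)
  simp only [Nat.add_one_ne_zero, if_false, zero_add]
  rw [mul_div_assoc', mul_div_assoc', div_le_div_iff₀ (by positivity) (by positivity)]
  calc _ = (#(box (n + 1) : Finset (ι → ℤ)) : ℝ) * (n + 1 : ℕ) * t ^ (n + 1) := by ring
    _ ≤ K * (n + 1 : ℕ) ^ d * t ^ (n + 1) := by gcongr
    _ ≤ K * t ^ (n + 1) * (1 + (n + 1 : ℕ) ^ d) := by
        nlinarith [mul_nonneg (by positivity : 0 ≤ K) (pow_nonneg ht0 (n + 1))]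

end LatticeShells

lemma supNorm_eq_natSupNorm {d : ℕ} (x : Fin d → ℤ) : supNorm x = natSupNorm x := rfl

theorem stmt10_general (d : ℕ) (c : ℝ) (hc : 0 < c) :
    ∃ C > (0 : ℝ), ∀ μ : ℝ, 0 < μ → μ ≤ 1 / 2 →
      (∑' x : Fin d → ℤ,
          Real.exp (-c * Real.sqrt μ * supNorm x) / (1 + supNorm x ^ d))
        ≤ C * (1 + |Real.log μ|) := by
  set K : ℝ := d * 3 ^ d
  refine ⟨1 + K * (c + |log c| + 1), by positivity, fun μ hμ hμ2 => ?_⟩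
  set a := c * √μ
  have ha : 0 < a := by positivity
  have hlog : -log (1 - exp (-a)) ≤ c + |log c| + |log μ| := by
    have hloga : log a = log c + log μ / 2 := by
      rw [log_mul hc.ne' (by positivity), log_sqrt hμ.le]
    have hac : a ≤ c := mul_le_of_le_one_right hc.le (sqrt_le_one.mpr (by linarith))
    linarith [neg_log_one_sub_exp_neg_le ha, neg_abs_le (log c), neg_abs_le (log μ),
      abs_nonneg (log μ)]
  have hsum := tsum_pow_natSupNorm_div_le (ι := Fin d) (exp_pos (-a)).le
    (exp_lt_one_iff.mpr (by linarith))
  rw [Fintype.card_fin] at hsum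
  calc ∑' x : Fin d → ℤ, exp (-c * √μ * supNorm x) / (1 + supNorm x ^ d)
      = ∑' x : Fin d → ℤ, exp (-a) ^ natSupNorm x
          / (1 + (natSupNorm x : ℝ) ^ d) := by
        refine tsum_congr fun x => ?_
        rw [← exp_nat_mul, supNorm_eq_natSupNorm]
        congr 2
        ring
    _ ≤ 1 + K * -log (1 - exp (-a)) := hsum
    _ ≤ 1 + K * (c + |log c| + |log μ|) := by gcongr
    _ ≤ (1 + K * (c + |log c| + 1)) * (1 + |log μ|) := by
        have hK : 0 ≤ K := by positivity
        have hcK : 0 ≤ K * (c + |log c|) := by positivity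
        nlinarith [mul_nonneg hcK (abs_nonneg (log μ)), abs_nonneg (log μ)]

theorem stmt10 (d : ℕ) (hd : 1 ≤ d) (c : ℝ) (hc : 0 < c) :
    ∃ C > (0 : ℝ), ∀ μ : ℝ, 0 < μ → μ ≤ 1 / 2 →
      (∑' x : Fin d → ℤ,
          Real.exp (-c * Real.sqrt μ * supNorm x) / (1 + supNorm x ^ d))
        ≤ C * (1 + |Real.log μ|) :=
  stmt10_general d c hc
end
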